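/- arXiv:2105.01012 — 3 statements merged into one kernel-verified Lean document; each statement's English description precedes it below -/
import Mathlib

section
/- Let X be a compact metrizable space equipped with its Borel σ-algebra, let R be a closed relation on X, let μ be a Borel probability measure on X such that μ(K) ≤ μ(R†(K)) for every compact set K ⊆ X, and let B ⊆ X be a Borel set. For n ∈ ℕ define E_n := ⋃_{j ≥ n} (R^j)†(B), where (R⁰)†(B) := B. Then: (i) each E_n is μ-null-measurable; (ii) E_{n+1} ⊆ E_n for all n; (iii) R†(E_n) = E_{n+1} for all n; and (iv) μ(E_n) = μ(E_0) for all n ∈ ℕ (measures computed in the completion of μ). -/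
open MeasureTheory Set

/-- Forward image of a set under a relation. -/
def relImg {X : Type*} (R : Set (X × X)) (A : Set X) : Set X :=
  {y | ∃ x ∈ A, (x, y) ∈ R}

/-- Backward image (adjoint image) of a set under a relation. -/
def relDag {X : Type*} (R : Set (X × X)) (A : Set X) : Set X :=
  {x | ∃ y ∈ A, (x, y) ∈ R}

/-- Iterates of a relation: `R⁰` is the identity relation and
`R^{n+1} = {(x,z) : ∃ y, (x,y) ∈ R ∧ (y,z) ∈ R^n}`. -/
def relIter {X : Type*} (R : Set (X × X)) : ℕ → Set (X × X)
  | 0 => {p | p.1 = p.2}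
  | n + 1 => {p | ∃ y, (p.1, y) ∈ R ∧ (y, p.2) ∈ relIter R n}

/-!
Each `E n` is a countable union of projections of Borel subsets of `X × X`, hence analytic.
By Choquet's capacitability argument, an analytic set `A = f '' (ℕ → ℕ)` can be approximated in
measure from inside by compact sets: bound the coordinates one at a time, each time losing at most
`δ k` of measure, and the image of the resulting compact box of sequences is the compact set.
Hence `E n` is null-measurable, and the hypothesis on compact sets passes to it, giving
`μ (E n) ≤ μ (R†(E n)) = μ (E (n + 1)) ≤ μ (E n)`.
-/

open scoped ENNReal SetRel
open Filter Topology

section Relations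

variable {X : Type*}

lemma relDag_eq_preimage (R : Set (X × X)) : relDag R = SetRel.preimage R := rfl

lemma relIter_succ (R : Set (X × X)) (n : ℕ) : relIter R (n + 1) = R ○ relIter R n := rfl

lemma relDag_relIter_succ (R : Set (X × X)) (n : ℕ) (A : Set X) :
    relDag (relIter R (n + 1)) A = relDag R (relDag (relIter R n) A) := by
  rw [relIter_succ, relDag_eq_preimage, SetRel.preimage_comp]
  rfl

lemma relDag_biUnion_le_eq_succ {R : Set (X × X)} {F : ℕ → Set X}
    (hF : ∀ j, relDag R (F j) = F (j + 1)) (n : ℕ) :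
    relDag R (⋃ j ∈ {j | n ≤ j}, F j) = ⋃ j ∈ {j | n + 1 ≤ j}, F j := by
  simp_rw [relDag_eq_preimage, SetRel.preimage_iUnion, ← relDag_eq_preimage, hF]
  ext x
  simp only [mem_iUnion, mem_ofPred_eq, exists_prop]
  constructor
  · rintro ⟨j, hj, hx⟩
    exact ⟨j + 1, by omega, hx⟩
  · rintro ⟨_ | j, hj, hx⟩
    · omega
    · exact ⟨j, by omega, hx⟩

lemma isClosed_setRelComp {α β γ : Type*} [TopologicalSpace α] [TopologicalSpace β]
    [TopologicalSpace γ] [CompactSpace β] {R : SetRel α β} {S : SetRel β γ} (hR : IsClosed R)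
    (hS : IsClosed S) : IsClosed (R ○ S) := by
  have hproj : R ○ S = Prod.fst '' {p : (α × γ) × β | (p.1.1, p.2) ∈ R ∧ (p.2, p.1.2) ∈ S} := by
    ext ⟨a, c⟩
    simp
  rw [hproj]
  exact isClosedMap_fst_of_compactSpace _
    ((hR.preimage (by fun_prop)).inter (hS.preimage (by fun_prop)))

lemma isClosed_relIter [TopologicalSpace X] [CompactSpace X] [T2Space X] {R : Set (X × X)}
    (hR : IsClosed R) : ∀ n, IsClosed (relIter R n)
  | 0 => isClosed_eq continuous_fst continuous_snd
  | n + 1 => isClosed_setRelComp hR (isClosed_relIter hR n)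

lemma analyticSet_relDag [TopologicalSpace X] [PolishSpace X] [MeasurableSpace X] [BorelSpace X]
    {S : Set (X × X)} (hS : MeasurableSet S) {B : Set X} (hB : MeasurableSet B) :
    AnalyticSet (relDag S B) := by
  have hproj : relDag S B = Prod.fst '' (S ∩ univ ×ˢ B) := by
    ext x
    simp [relDag, and_comm]
  rw [hproj]
  exact (hS.inter (MeasurableSet.univ.prod hB)).analyticSet.image_of_continuous continuous_fst

end Relations

section Capacitability

variable {X : Type*} [MeasurableSpace X] {μ : Measure X}

lemma exists_measure_image_le_image_inter_add [IsFiniteMeasure μ] (f : (ℕ → ℕ) → X)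
    (S : Set (ℕ → ℕ)) (k : ℕ) {δ : ℝ≥0∞} (hδ : δ ≠ 0) :
    ∃ m, μ (f '' S) ≤ μ (f '' (S ∩ {x | x k ≤ m})) + δ := by
  have hunion : f '' S = ⋃ m, f '' (S ∩ {x | x k ≤ m}) := by
    rw [← image_iUnion, ← inter_iUnion, iUnion_eq_univ_iff.2 fun x => ⟨x k, le_refl (x k)⟩,
      inter_univ]
  have hmono : Monotone fun m => f '' (S ∩ {x | x k ≤ m}) := fun m m' hm =>
    image_mono (inter_subset_inter_right _ fun x hx => le_trans hx hm)
  have hlt : μ (f '' S) < ⨆ m, (μ (f '' (S ∩ {x | x k ≤ m})) + δ) := by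
    rw [← ENNReal.iSup_add, ← hmono.measure_iUnion, ← hunion]
    exact ENNReal.lt_add_right (measure_ne_top _ _) hδ
  obtain ⟨m, hm⟩ := lt_iSup_iff.1 hlt
  exact ⟨m, hm.le⟩

lemma exists_forall_lt_le_subset_of_pi_Iic_subset {g : ℕ → ℕ} {V : Set (ℕ → ℕ)}
    (hV : IsOpen V) (hgV : univ.pi (fun i => Iic (g i)) ⊆ V) :
    ∃ k, {x | ∀ i < k, x i ≤ g i} ⊆ V := by
  by_contra! h
  choose x hxk hxV using fun k => not_subset.1 (h k)
  have hclamp : ∀ k, (fun i => min (x k i) (g i)) ∈ univ.pi (fun i => Iic (g i)) :=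
    fun k i _ => mem_Iic.2 (min_le_right _ _)
  obtain ⟨a, ha, φ, hφ, hlim⟩ :=
    (isCompact_univ_pi fun i => (finite_Iic (g i)).isCompact).tendsto_subseq hclamp
  -- `x (φ j)` agrees with its clamp in every fixed coordinate once `φ j` exceeds it
  have hxφ : Tendsto (x ∘ φ) atTop (𝓝 a) := tendsto_pi_nhds.2 fun i =>
    (tendsto_pi_nhds.1 hlim i).congr' <| (hφ.tendsto_atTop.eventually_gt_atTop i).mono
      fun j hj => min_eq_left (hxk (φ j) i hj)
  obtain ⟨j, hj⟩ := (hxφ.eventually (hV.mem_nhds (hgV ha))).exists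
  exact hxV (φ j) hj

theorem exists_isCompact_subset_range_le_add [TopologicalSpace X] [IsFiniteMeasure μ]
    [μ.OuterRegular] {f : (ℕ → ℕ) → X} (hf : Continuous f) {ε : ℝ≥0∞} (hε : ε ≠ 0) :
    ∃ K ⊆ range f, IsCompact K ∧ μ (range f) ≤ μ K + ε := by
  obtain ⟨δ, hδ, hδε⟩ := ENNReal.exists_pos_sum_of_countable' hε ℕ
  choose m hm using fun S k => exists_measure_image_le_image_inter_add (μ := μ) f S k (hδ k).ne'
  let N : ℕ → Set (ℕ → ℕ) := fun k => Nat.rec univ (fun k S => S ∩ {x | x k ≤ m S k}) k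
  let g : ℕ → ℕ := fun k => m (N k) k
  have hN : ∀ k, N k = {x | ∀ i < k, x i ≤ g i} := by
    intro k
    induction k with
    | zero => simp [N]
    | succ k ih =>
      change N k ∩ {x | x k ≤ g k} = _
      ext x
      simp only [ih, mem_inter_iff, mem_ofPred_eq, Nat.forall_lt_succ_right]
  have hμN : ∀ k, μ (range f) ≤ μ (f '' N k) + ∑ i ∈ Finset.range k, δ i := by
    intro k
    induction k with
    | zero => simp [N]
    | succ k ih =>
      calc μ (range f) ≤ μ (f '' N k) + ∑ i ∈ Finset.range k, δ i := ih
        _ ≤ μ (f '' N (k + 1)) + δ k + ∑ i ∈ Finset.range k, δ i := by gcongr; exact hm (N k) k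
        _ = μ (f '' N (k + 1)) + ∑ i ∈ Finset.range (k + 1), δ i := by
          rw [Finset.sum_range_succ]; ring
  set K := f '' univ.pi fun i => Iic (g i)
  refine ⟨K, image_subset_range _ _,
    (isCompact_univ_pi fun i => (finite_Iic (g i)).isCompact).image hf, ?_⟩
  rw [K.measure_eq_iInf_isOpen, ← tsub_le_iff_right]
  refine le_iInf₂ fun U hKU => le_iInf fun hU => tsub_le_iff_right.2 ?_
  obtain ⟨k, hk⟩ := exists_forall_lt_le_subset_of_pi_Iic_subset (hU.preimage hf)
    (image_subset_iff.1 hKU)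
  calc μ (range f) ≤ μ (f '' N k) + ∑ i ∈ Finset.range k, δ i := hμN k
    _ ≤ μ U + ε := add_le_add (measure_mono (by rw [hN]; exact image_subset_iff.2 hk))
      ((ENNReal.sum_le_tsum _).trans hδε.le)

theorem MeasureTheory.AnalyticSet.exists_isCompact_subset_le_add [TopologicalSpace X]
    [IsFiniteMeasure μ] [μ.OuterRegular] {A : Set X} (hA : AnalyticSet A) {ε : ℝ≥0∞} (hε : ε ≠ 0) :
    ∃ K ⊆ A, IsCompact K ∧ μ A ≤ μ K + ε := by
  rcases AnalyticSet_def A ▸ hA with rfl | ⟨f, hf, rfl⟩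
  · exact ⟨∅, empty_subset _, isCompact_empty, by simp⟩
  · exact exists_isCompact_subset_range_le_add hf hε

theorem MeasureTheory.AnalyticSet.nullMeasurableSet [TopologicalSpace X] [T2Space X]
    [OpensMeasurableSpace X] [IsFiniteMeasure μ] [μ.OuterRegular] {A : Set X} (hA : AnalyticSet A) :
    NullMeasurableSet A μ := by
  choose K hKA hK hμK using fun n : ℕ =>
    hA.exists_isCompact_subset_le_add (μ := μ) (ENNReal.inv_ne_zero.2 (ENNReal.natCast_ne_top n))
  have hμ : μ A ≤ μ (⋃ n, K n) := by
    refine ENNReal.le_of_forall_pos_le_add fun δ hδ _ => ?_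
    obtain ⟨n, hn⟩ := ENNReal.exists_inv_nat_lt (a := δ) (by exact_mod_cast hδ.ne')
    calc μ A ≤ μ (K n) + (n : ℝ≥0∞)⁻¹ := hμK n
      _ ≤ μ (⋃ n, K n) + δ := add_le_add (measure_mono (subset_iUnion K n)) hn.le
  have hmeas : MeasurableSet (⋃ n, K n) := .iUnion fun n => (hK n).isClosed.measurableSet
  exact hmeas.nullMeasurableSet.congr <|
    ae_eq_of_subset_of_measure_ge (iUnion_subset hKA) hμ hmeas.nullMeasurableSet
      (measure_ne_top _ _)

theorem MeasureTheory.AnalyticSet.measure_le_measure_relDag [TopologicalSpace X]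
    [IsFiniteMeasure μ] [μ.OuterRegular] {R : Set (X × X)}
    (hR : ∀ K : Set X, IsCompact K → μ K ≤ μ (relDag R K))
    {A : Set X} (hA : AnalyticSet A) : μ A ≤ μ (relDag R A) := by
  refine ENNReal.le_of_forall_pos_le_add fun δ hδ _ => ?_
  obtain ⟨K, hKA, hK, hμK⟩ := hA.exists_isCompact_subset_le_add (μ := μ) (ε := δ)
    (by exact_mod_cast hδ.ne')
  calc μ A ≤ μ K + δ := hμK
    _ ≤ μ (relDag R A) + δ :=
      add_le_add_left ((hR K hK).trans (measure_mono (SetRel.preimage_mono hKA))) δ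

end Capacitability

/-- **Steps 1 and 2 in the proof of the paper's Theorem 1.1**: properties of the sets
`E_n := ⋃_{j ≥ n} (R^j)†(B)` (with `(R⁰)†(B) = B`, which holds since `R⁰` is the
identity relation). -/
theorem recurrence_sets_properties
    {X : Type*} [TopologicalSpace X] [CompactSpace X] [TopologicalSpace.MetrizableSpace X]
    [MeasurableSpace X] [BorelSpace X]
    (R : Set (X × X)) (hR : IsClosed R)
    (μ : Measure X) [IsProbabilityMeasure μ]
    (hinv : ∀ K : Set X, IsCompact K → μ K ≤ μ (relDag R K))
    (B : Set X) (hB : MeasurableSet B)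
    (E : ℕ → Set X) (hE : ∀ n, E n = ⋃ j ∈ {j : ℕ | n ≤ j}, relDag (relIter R j) B) :
    (∀ n, NullMeasurableSet (E n) μ) ∧
    (∀ n, E (n + 1) ⊆ E n) ∧
    (∀ n, relDag R (E n) = E (n + 1)) ∧
    (∀ n, μ (E n) = μ (E 0)) := by
  have : PolishSpace X := by
    let := TopologicalSpace.metrizableSpaceMetric X
    infer_instance
  have hanalytic (n : ℕ) : AnalyticSet (E n) := by
    rw [hE, biUnion_eq_iUnion]
    exact .iUnion fun j => analyticSet_relDag (isClosed_relIter hR j).measurableSet hB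
  have hanti (n : ℕ) : E (n + 1) ⊆ E n := by
    rw [hE, hE]
    exact biUnion_subset_biUnion_left fun j (hj : n + 1 ≤ j) => (by omega : n ≤ j)
  have hshift (n : ℕ) : relDag R (E n) = E (n + 1) := by
    rw [hE, hE, relDag_biUnion_le_eq_succ fun j => (relDag_relIter_succ R j B).symm]
  have hgrow (n : ℕ) : μ (E n) ≤ μ (E (n + 1)) :=
    hshift n ▸ (hanalytic n).measure_le_measure_relDag hinv
  refine ⟨fun n => (hanalytic n).nullMeasurableSet, hanti, hshift, fun n => ?_⟩
  exact le_antisymm (measure_mono (antitone_nat_of_succ_le hanti (Nat.zero_le n)))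
    (monotone_nat_of_le_succ hgrow (Nat.zero_le n))
end

section
/- Let X be a compact metrizable space equipped with its Borel σ-algebra, let R be a closed relation on X, and let μ be a finite Borel measure on X such that μ(K) ≤ μ(R†(K)) for every compact set K ⊆ X (note that R†(K) is compact, hence Borel). If A ⊆ X is such that both A and R†(A) are μ-null-measurable, then μ(A) ≤ μ(R†(A)) (measures computed in the completion of μ). -/
open MeasureTheory Set

lemma relDag_mono {X : Type*} (R : Set (X × X)) : Monotone (relDag R) :=
  fun _ _ hAB _ ⟨y, hy, hxy⟩ => ⟨y, hAB hy, hxy⟩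

/-- Replacing `A` by a measurable subset of full measure, inner regularity reduces the claim
to compact subsets `K ⊆ A`, for which `μ K ≤ μ (f K) ≤ μ (f A)`. -/
theorem MeasureTheory.NullMeasurableSet.measure_le_of_forall_isCompact
    {X : Type*} [TopologicalSpace X] [MeasurableSpace X] {μ : Measure X}
    [μ.InnerRegularCompactLTTop] {f : Set X → Set X} (hf : Monotone f)
    (hfK : ∀ K, IsCompact K → μ K ≤ μ (f K)) {A : Set X} (hA : NullMeasurableSet A μ)
    (hA_ne_top : μ A ≠ ⊤) : μ A ≤ μ (f A) := by
  obtain ⟨B, hBA, hB, hBA_ae⟩ := hA.exists_measurable_subset_ae_eq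
  rw [← measure_congr hBA_ae] at hA_ne_top ⊢
  rw [hB.measure_eq_iSup_isCompact_of_ne_top hA_ne_top]
  refine iSup₂_le fun K hKB => iSup_le fun hK => ?_
  exact (hfK K hK).trans (measure_mono (hf (hKB.trans hBA)))

theorem backward_measure_inequality_general
    {X : Type*} [TopologicalSpace X] [CompactSpace X] [TopologicalSpace.MetrizableSpace X]
    [MeasurableSpace X] [BorelSpace X]
    (R : Set (X × X))
    (μ : Measure X) [IsFiniteMeasure μ]
    (hinv : ∀ K : Set X, IsCompact K → μ K ≤ μ (relDag R K))
    (A : Set X) (hA : NullMeasurableSet A μ) :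
    μ A ≤ μ (relDag R A) :=
  hA.measure_le_of_forall_isCompact (relDag_mono R) hinv (measure_ne_top μ A)

/-- **Relation-theoretic form of the paper's Lemma 5.3**: the compact-set inequality
`μ(K) ≤ μ(R†(K))` upgrades, by inner regularity, to all `μ`-null-measurable sets `A`
with `R†(A)` also `μ`-null-measurable. -/
theorem backward_measure_inequality
    {X : Type*} [TopologicalSpace X] [CompactSpace X] [TopologicalSpace.MetrizableSpace X]
    [MeasurableSpace X] [BorelSpace X]
    (R : Set (X × X)) (hR : IsClosed R)
    (μ : Measure X) [IsFiniteMeasure μ]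
    (hinv : ∀ K : Set X, IsCompact K → μ K ≤ μ (relDag R K))
    (A : Set X) (hA : NullMeasurableSet A μ) (hA' : NullMeasurableSet (relDag R A) μ) :
    μ A ≤ μ (relDag R A) :=
  backward_measure_inequality_general R μ hinv A hA
end

section
/- Let X be a compact metrizable space equipped with its Borel σ-algebra, let R be a closed relation on X, let d > 0 be a real number, and let μ be a finite Borel measure on X such that: (i) μ(R(U)) ≤ d·μ(U) for every open set U ⊆ X (note that R(U) is σ-compact, hence Borel), and (ii) μ(K) ≤ μ(R(K)) for every compact set K ⊆ X. If A ⊆ X is such that both A and R(A) are μ-null-measurable, then (1/d)·μ(R(A)) ≤ μ(A) ≤ μ(R(A)) (measures computed in the completion of μ). -/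
/-!
Outer regularity of `μ` upgrades the bound `μ(R(U)) ≤ d·μ(U)` from open sets to all sets, and
inner regularity upgrades `μ(K) ≤ μ(R(K))` from compact sets to null-measurable ones; on a
compact metrizable space a finite Borel measure has both properties.
-/

open MeasureTheory Set

theorem relImg_mono {X : Type*} (R : Set (X × X)) : Monotone (relImg R) :=
  fun _ _ h _ ⟨x, hx, hxy⟩ => ⟨x, h hx, hxy⟩

namespace MeasureTheory.Measure

variable {α β : Type*} [TopologicalSpace α] [MeasurableSpace α] [MeasurableSpace β]
  {μ : Measure α} {ν : Measure β} {f : Set α → Set β}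

theorem OuterRegular.measure_le_mul_of_forall_isOpen [μ.OuterRegular] (hf : Monotone f)
    {c : ENNReal} (hc : c ≠ ⊤) (h : ∀ U, IsOpen U → ν (f U) ≤ c * μ U) (A : Set α) :
    ν (f A) ≤ c * μ A := by
  have := OuterRegular.smul μ hc
  rw [← smul_eq_mul, ← smul_apply, A.measure_eq_iInf_isOpen]
  refine le_iInf₂ fun U hAU => le_iInf fun hU => ?_
  simpa only [smul_apply, smul_eq_mul] using (measure_mono (hf hAU)).trans (h U hU)

theorem InnerRegular.le_measure_of_forall_isCompact [μ.InnerRegular] (hf : Monotone f)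
    (h : ∀ K, IsCompact K → μ K ≤ ν (f K)) {A : Set α} (hA : NullMeasurableSet A μ) :
    μ A ≤ ν (f A) := by
  obtain ⟨B, hBA, hB, hBA_ae⟩ := hA.exists_measurable_subset_ae_eq
  rw [← measure_congr hBA_ae, hB.measure_eq_iSup_isCompact]
  exact iSup₂_le fun K hKB => iSup_le fun hK =>
    (h K hK).trans (measure_mono (hf (hKB.trans hBA)))

end MeasureTheory.Measure

theorem forward_measure_inequality_general
    {X : Type*} [TopologicalSpace X] [CompactSpace X] [TopologicalSpace.MetrizableSpace X]
    [MeasurableSpace X] [BorelSpace X]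
    (R : Set (X × X))
    (d : ℝ) (hd : 0 < d)
    (μ : Measure X) [IsFiniteMeasure μ]
    (hopen : ∀ U : Set X, IsOpen U → μ (relImg R U) ≤ ENNReal.ofReal d * μ U)
    (hcpt : ∀ K : Set X, IsCompact K → μ K ≤ μ (relImg R K))
    (A : Set X) (hA : NullMeasurableSet A μ) :
    ENNReal.ofReal (1 / d) * μ (relImg R A) ≤ μ A ∧ μ A ≤ μ (relImg R A) := by
  let := TopologicalSpace.metrizableSpaceMetric X
  have hRA : μ (relImg R A) ≤ ENNReal.ofReal d * μ A :=
    Measure.OuterRegular.measure_le_mul_of_forall_isOpen (relImg_mono R) ENNReal.ofReal_ne_top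
      hopen A
  refine ⟨?_, Measure.InnerRegular.le_measure_of_forall_isCompact (relImg_mono R) hcpt hA⟩
  calc ENNReal.ofReal (1 / d) * μ (relImg R A)
      ≤ ENNReal.ofReal (1 / d) * (ENNReal.ofReal d * μ A) := by gcongr
    _ = μ A := by
      rw [← mul_assoc, ← ENNReal.ofReal_mul (by positivity), one_div_mul_cancel hd.ne',
        ENNReal.ofReal_one, one_mul]

/-- **Relation-theoretic form of the paper's Lemma 5.4**: from
`μ(R(U)) ≤ d·μ(U)` for open `U` and `μ(K) ≤ μ(R(K))` for compact `K`, one obtains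
`(1/d)·μ(R(A)) ≤ μ(A) ≤ μ(R(A))` for every `μ`-null-measurable set `A` with `R(A)`
also `μ`-null-measurable. -/
theorem forward_measure_inequality
    {X : Type*} [TopologicalSpace X] [CompactSpace X] [TopologicalSpace.MetrizableSpace X]
    [MeasurableSpace X] [BorelSpace X]
    (R : Set (X × X)) (hR : IsClosed R)
    (d : ℝ) (hd : 0 < d)
    (μ : Measure X) [IsFiniteMeasure μ]
    (hopen : ∀ U : Set X, IsOpen U → μ (relImg R U) ≤ ENNReal.ofReal d * μ U)
    (hcpt : ∀ K : Set X, IsCompact K → μ K ≤ μ (relImg R K))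
    (A : Set X) (hA : NullMeasurableSet A μ) (hA' : NullMeasurableSet (relImg R A) μ) :
    ENNReal.ofReal (1 / d) * μ (relImg R A) ≤ μ A ∧ μ A ≤ μ (relImg R A) :=
  forward_measure_inequality_general R d hd μ hopen hcpt A hA
end
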